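/- arXiv:1508.03572 — 5 statements merged into one kernel-verified Lean document; each statement's English description precedes it below -/
import Mathlib

section
/- For all integers n ≥ k ≥ 1 there exists a deterministic adaptive strategy σ (depending only on n, not on the family or on k) with the following property: for every nonempty family F of subsets of {1,…,n} in which every member has at most k elements, running σ with each query Y ⊆ {1,…,n} answered by the truth value of "there exists W ∈ F with W ⊆ Y" terminates with output a member of F, after making at most 2·k·(log₂(n/k) + 2) queries. (Theorem 1, query-complexity part / Lemma 1.) -/
/-- An action of a deterministic adaptive strategy over the universe
`{1,…,n}` (modelled as `Fin n`): either query a subset `Y`, or halt and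
output a subset `W`. -/
inductive WEAction (n : ℕ) where
  | query (Y : Finset (Fin n))
  | halt (W : Finset (Fin n))

/-- The transcript (list of Boolean answers received) after `i` steps of
running the strategy `σ` against the answer function `a`: at each step, if
`σ` queries `Y` the answer `a Y` is appended; once `σ` halts the transcript
no longer changes. -/
def WEtranscript {n : ℕ} (σ : List Bool → WEAction n)
    (a : Finset (Fin n) → Bool) : ℕ → List Bool
  | 0 => []
  | i + 1 =>
    match σ (WEtranscript σ a i) with
    | WEAction.query Y => WEtranscript σ a i ++ [a Y]
    | WEAction.halt _ => WEtranscript σ a i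

/-- The list of query sets made by the strategy `σ` against the answer
function `a` within the first `i` steps. -/
def WEqueries {n : ℕ} (σ : List Bool → WEAction n)
    (a : Finset (Fin n) → Bool) : ℕ → List (Finset (Fin n))
  | 0 => []
  | i + 1 =>
    match σ (WEtranscript σ a i) with
    | WEAction.query Y => WEqueries σ a i ++ [Y]
    | WEAction.halt _ => WEqueries σ a i

/-!
The strategy keeps a context `ctx` and a block `C` such that `ctx ∪ C` is accepted and `ctx`
is rejected. It splits `C` into halves `L ∪ R` with `#L ≥ #R`: if `ctx ∪ L` or `ctx ∪ R` is
accepted it recurses into that half; otherwise both halves are needed, and it shrinks `R` in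
context `ctx ∪ L` and then `L` in context `ctx ∪ E_R`, where `E_R` is what `R` shrank to.
Answers are monotone, so a rejection survives shrinking the context, and the set that is
finally found is a minimal accepted set, i.e. a member of `F`, with at most `k` elements.

Shrinking a block of `s` elements to `j` elements costs at most `2 j log₂ (s / j) + 4 j - 4`
queries: a step into one half shrinks `s` by a factor `3/2` or `2`, and the step into both
halves is paid for by the concavity of `log`. One more query at the start checks whether `∅`
is accepted.
-/

open Finset Real

lemma mul_log_div_add_mul_log_div_le {s₁ s₂ j₁ j₂ : ℝ} (hs₁ : 0 < s₁) (hs₂ : 0 < s₂)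
    (hj₁ : 0 < j₁) (hj₂ : 0 < j₂) :
    j₁ * log (s₁ / j₁) + j₂ * log (s₂ / j₂) ≤ (j₁ + j₂) * log ((s₁ + s₂) / (j₁ + j₂)) := by
  have hj : 0 < j₁ + j₂ := by positivity
  have h := strictConcaveOn_log_Ioi.concaveOn.2 (Set.mem_Ioi.2 (div_pos hs₁ hj₁))
    (Set.mem_Ioi.2 (div_pos hs₂ hj₂)) (div_nonneg hj₁.le hj.le) (div_nonneg hj₂.le hj.le)
    (by field_simp)
  have e : j₁ / (j₁ + j₂) * (s₁ / j₁) + j₂ / (j₁ + j₂) * (s₂ / j₂) = (s₁ + s₂) / (j₁ + j₂) := by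
    field_simp
  simp only [smul_eq_mul, e] at h
  calc j₁ * log (s₁ / j₁) + j₂ * log (s₂ / j₂)
      = (j₁ + j₂) * (j₁ / (j₁ + j₂) * log (s₁ / j₁) + j₂ / (j₁ + j₂) * log (s₂ / j₂)) := by
        field_simp
    _ ≤ (j₁ + j₂) * log ((s₁ + s₂) / (j₁ + j₂)) := mul_le_mul_of_nonneg_left h hj.le

lemma half_le_logb_two_div {c d : ℝ} (hd : 0 < d) (h : 3 * d ≤ 2 * c) :
    1 / 2 ≤ logb 2 (c / d) := by
  rw [le_logb_iff_rpow_le one_lt_two (div_pos (by linarith) hd), le_div_iff₀ hd, ← sqrt_eq_rpow]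
  nlinarith [sq_sqrt (zero_le_two : (0 : ℝ) ≤ 2), sqrt_nonneg 2]

lemma one_le_logb_two_div {c d : ℝ} (hd : 0 < d) (h : 2 * d ≤ c) : 1 ≤ logb 2 (c / d) := by
  rw [le_logb_iff_rpow_le one_lt_two (div_pos (by linarith) hd), le_div_iff₀ hd, rpow_one]
  exact h

noncomputable def searchBound (s j : ℝ) : ℝ := 2 * j * logb 2 (s / j) + 4 * j - 4

lemma searchBound_one_one : searchBound 1 1 = 0 := by
  norm_num [searchBound]

lemma searchBound_eq_add {s s' j : ℝ} (hs : 0 < s) (hs' : 0 < s') (hj : 0 < j) :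
    searchBound s j = searchBound s' j + 2 * j * logb 2 (s / s') := by
  simp only [searchBound, logb_div hs.ne' hj.ne', logb_div hs'.ne' hj.ne',
    logb_div hs.ne' hs'.ne']
  ring

lemma searchBound_add_add_two_le {s₁ s₂ j₁ j₂ : ℝ} (hs₁ : 0 < s₁) (hs₂ : 0 < s₂)
    (hj₁ : 0 < j₁) (hj₂ : 0 < j₂) :
    searchBound s₁ j₁ + searchBound s₂ j₂ + 2 ≤ searchBound (s₁ + s₂) (j₁ + j₂) := by
  have h : j₁ * logb 2 (s₁ / j₁) + j₂ * logb 2 (s₂ / j₂) ≤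
      (j₁ + j₂) * logb 2 ((s₁ + s₂) / (j₁ + j₂)) := by
    simp only [logb, ← mul_div_assoc, ← add_div]
    exact div_le_div_of_nonneg_right (mul_log_div_add_mul_log_div_le hs₁ hs₂ hj₁ hj₂)
      (log_pos one_lt_two).le
  simp only [searchBound]
  linarith

lemma searchBound_le_searchBound {s j k : ℝ} (hj : 0 < j) (hjk : j ≤ k) (hks : k ≤ s) :
    searchBound s j ≤ searchBound s k := by
  have hk : 0 < k := hj.trans_le hjk
  have hlog2 : 1 / 2 < log 2 := by linarith [log_two_gt_d9]
  have hsk : 0 ≤ logb 2 (s / k) := logb_nonneg one_lt_two ((one_le_div hk).2 hks)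
  have hsplit : logb 2 (s / j) = logb 2 (s / k) + logb 2 (k / j) := by
    rw [← logb_mul (div_pos (hk.trans_le hks) hk).ne' (div_pos hk hj).ne',
      div_mul_div_cancel₀ hk.ne']
  have hkj : j * logb 2 (k / j) ≤ 2 * (k - j) := by
    have h := mul_le_mul_of_nonneg_left (log_le_sub_one_of_pos (div_pos hk hj)) hj.le
    rw [mul_sub, mul_div_cancel₀ _ hj.ne', mul_one] at h
    rw [logb, mul_div_assoc', div_le_iff₀ (log_pos one_lt_two)]
    nlinarith
  simp only [searchBound, hsplit]
  nlinarith [mul_nonneg (sub_nonneg.2 hjk) hsk]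

/-- Adaptive query algorithms against an inclusion oracle on `Finset α`, returning a value
of type `β`. -/
inductive Query (α β : Type*) where
  | pure (b : β)
  | ask (Y : Finset α) (next : Bool → Query α β)

namespace Query

variable {α β γ : Type*}

def bind : Query α β → (β → Query α γ) → Query α γ
  | pure b, f => f b
  | ask Y next, f => ask Y fun b => (next b).bind f

def eval (a : Finset α → Bool) : Query α β → β
  | pure b => b
  | ask Y next => (next (a Y)).eval a

def cost (a : Finset α → Bool) : Query α β → ℕ
  | pure _ => 0
  | ask Y next => (next (a Y)).cost a + 1

@[simp] lemma eval_bind (a : Finset α → Bool) (q : Query α β) (f : β → Query α γ) :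
    (q.bind f).eval a = (f (q.eval a)).eval a := by
  induction q with
  | pure b => rfl
  | ask Y next ih => exact ih (a Y)

@[simp] lemma cost_bind (a : Finset α → Bool) (q : Query α β) (f : β → Query α γ) :
    (q.bind f).cost a = q.cost a + (f (q.eval a)).cost a := by
  induction q with
  | pure b => simp [bind, cost, eval]
  | ask Y next ih => simp only [bind, cost, eval, ih]; omega

def toStrategy {n : ℕ} : Query (Fin n) (Finset (Fin n)) → List Bool → WEAction n
  | pure W, _ => .halt W
  | ask Y _, [] => .query Y
  | ask _ next, b :: bs => toStrategy (next b) bs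

lemma WEtranscript_toStrategy_ask {n : ℕ} (a : Finset (Fin n) → Bool) (Y : Finset (Fin n))
    (next : Bool → Query (Fin n) (Finset (Fin n))) (i : ℕ) :
    WEtranscript (ask Y next).toStrategy a (i + 1) =
        a Y :: WEtranscript (next (a Y)).toStrategy a i ∧
      (WEqueries (ask Y next).toStrategy a (i + 1)).length =
        (WEqueries (next (a Y)).toStrategy a i).length + 1 := by
  induction i with
  | zero => simp [WEtranscript, WEqueries, toStrategy]
  | succ i ih =>
    have key : (ask Y next).toStrategy (WEtranscript (ask Y next).toStrategy a (i + 1)) =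
        (next (a Y)).toStrategy (WEtranscript (next (a Y)).toStrategy a i) := by
      rw [ih.1]
      rfl
    rw [WEtranscript.eq_2 _ a (i + 1), WEqueries.eq_2 _ a (i + 1), key,
      WEtranscript.eq_2 (next (a Y)).toStrategy a i, WEqueries.eq_2 (next (a Y)).toStrategy a i]
    cases (next (a Y)).toStrategy (WEtranscript (next (a Y)).toStrategy a i) <;> simp [ih.1, ih.2]

lemma toStrategy_halt {n : ℕ} (a : Finset (Fin n) → Bool) (q : Query (Fin n) (Finset (Fin n))) :
    q.toStrategy (WEtranscript q.toStrategy a (q.cost a)) = .halt (q.eval a) ∧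
      (WEqueries q.toStrategy a (q.cost a)).length = q.cost a := by
  induction q with
  | pure W => simp [toStrategy, WEqueries, eval, cost]
  | ask Y next ih =>
    obtain ⟨htr, hlen⟩ := WEtranscript_toStrategy_ask a Y next ((next (a Y)).cost a)
    rw [cost, htr, hlen, toStrategy, eval]
    exact ⟨(ih (a Y)).1, by rw [(ih (a Y)).2]⟩

end Query

lemma Monotone.eq_false_of_le {β : Type*} [Preorder β] {f : β → Bool} (hf : Monotone f)
    {x y : β} (h : x ≤ y) (hy : f y = false) : f x = false := by
  simpa [hy] using mt (Bool.le_iff_imp.1 (hf h))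

namespace Query

variable {α : Type*}

noncomputable def half (C : Finset α) : Finset α :=
  (exists_subset_card_eq (s := C) (n := (#C + 1) / 2) (by omega)).choose

lemma half_subset (C : Finset α) : half C ⊆ C :=
  (exists_subset_card_eq (s := C) (n := (#C + 1) / 2) (by omega)).choose_spec.1

lemma card_half (C : Finset α) : #(half C) = (#C + 1) / 2 :=
  (exists_subset_card_eq (s := C) (n := (#C + 1) / 2) (by omega)).choose_spec.2

variable [DecidableEq α]

lemma card_sdiff_half (C : Finset α) : #(C \ half C) = #C / 2 := by
  rw [card_sdiff_of_subset (half_subset C), card_half]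
  omega

noncomputable def search (ctx C : Finset α) : Query α (Finset α) :=
  if _ : #C ≤ 1 then pure C else
    ask (ctx ∪ half C) fun b₁ => if b₁ then search ctx (half C) else
    ask (ctx ∪ (C \ half C)) fun b₂ => if b₂ then search ctx (C \ half C) else
    (search (ctx ∪ half C) (C \ half C)).bind fun E =>
      (search (ctx ∪ E) (half C)).bind fun E' => pure (E ∪ E')
termination_by #C
decreasing_by all_goals first | (rw [card_half]; omega) | (rw [card_sdiff_half]; omega)

variable {a : Finset α → Bool} {ctx C L R E E' : Finset α} {m m' : ℕ}

def IsMinimalOver (a : Finset α → Bool) (ctx E : Finset α) : Prop :=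
  a (ctx ∪ E) ∧ ∀ x ∈ E, a (ctx ∪ E.erase x) = false

lemma IsMinimalOver.union (ha : Monotone a) (hE : IsMinimalOver a (ctx ∪ L) E)
    (hE' : IsMinimalOver a (ctx ∪ E) E') (hE'L : E' ⊆ L) : IsMinimalOver a ctx (E ∪ E') := by
  refine ⟨by rw [← union_assoc]; exact hE'.1, fun x hx => ?_⟩
  rw [erase_union_distrib]
  by_cases hxE' : x ∈ E'
  · refine ha.eq_false_of_le (fun y => ?_) (hE'.2 x hxE')
    simp only [mem_union, mem_erase]
    tauto
  · have hxE : x ∈ E := by simpa [hxE'] using hx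
    refine ha.eq_false_of_le (fun y => ?_) (hE.2 x hxE)
    simp only [mem_union, mem_erase]
    have := @hE'L y
    tauto

structure SearchSpec (a : Finset α → Bool) (ctx C E : Finset α) (m : ℕ) : Prop where
  subset : E ⊆ C
  nonempty : E.Nonempty
  isMinimalOver : IsMinimalOver a ctx E
  cost_le : (m : ℝ) ≤ searchBound #C #E

lemma SearchSpec.of_card_le_one (hC : #C ≤ 1) (hpos : a (ctx ∪ C)) (hneg : a ctx = false) :
    SearchSpec a ctx C C 0 := by
  obtain ⟨x, rfl⟩ : ∃ x, C = {x} := by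
    refine card_eq_one.1 (le_antisymm hC (card_pos.2 (nonempty_iff_ne_empty.2 ?_)))
    rintro rfl
    simp [hneg] at hpos
  exact ⟨subset_rfl, singleton_nonempty x, ⟨hpos, by simp [hneg]⟩, by simp [searchBound_one_one]⟩

lemma SearchSpec.of_subset {D : Finset α} {c : ℕ} (h : SearchSpec a ctx D E m) (hDC : D ⊆ C)
    (hc : (c : ℝ) ≤ 2 * logb 2 (#C / #D)) : SearchSpec a ctx C E (m + c) := by
  refine ⟨h.subset.trans hDC, h.nonempty, h.isMinimalOver, ?_⟩
  have hE : (1 : ℝ) ≤ #E := by exact_mod_cast h.nonempty.card_pos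
  have hD : (#E : ℝ) ≤ #D := by exact_mod_cast card_le_card h.subset
  have hC : (#D : ℝ) ≤ #C := by exact_mod_cast card_le_card hDC
  have hlog : 0 ≤ logb 2 (#C / #D) := by linarith [(Nat.cast_nonneg c : (0 : ℝ) ≤ c)]
  rw [searchBound_eq_add (s' := #D) (by linarith) (by linarith) (by linarith)]
  push_cast
  nlinarith [h.cost_le, mul_nonneg (sub_nonneg.2 hE) hlog]

lemma SearchSpec.union (ha : Monotone a) (hLR : Disjoint L R) (hE : SearchSpec a (ctx ∪ L) R E m)
    (hE' : SearchSpec a (ctx ∪ E) L E' m') : SearchSpec a ctx (L ∪ R) (E ∪ E') (m + m' + 2) := by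
  refine ⟨union_comm L R ▸ union_subset_union hE.subset hE'.subset,
    hE.nonempty.mono subset_union_left, hE.isMinimalOver.union ha hE'.isMinimalOver hE'.subset, ?_⟩
  have hb := searchBound_add_add_two_le (s₁ := #R) (s₂ := #L) (j₁ := #E) (j₂ := #E')
    (by exact_mod_cast (hE.nonempty.mono hE.subset).card_pos)
    (by exact_mod_cast (hE'.nonempty.mono hE'.subset).card_pos)
    (by exact_mod_cast hE.nonempty.card_pos) (by exact_mod_cast hE'.nonempty.card_pos)
  rw [union_comm L R, card_union_of_disjoint hLR.symm,
    card_union_of_disjoint (hLR.mono hE'.subset hE.subset).symm]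
  push_cast
  linarith [hE.cost_le, hE'.cost_le]

theorem search_spec (ha : Monotone a) (ctx C : Finset α) (hpos : a (ctx ∪ C))
    (hneg : a ctx = false) :
    SearchSpec a ctx C ((search ctx C).eval a) ((search ctx C).cost a) := by
  induction hs : #C using Nat.strong_induction_on generalizing ctx C with
  | _ s ih =>
  subst hs
  by_cases h1 : #C ≤ 1
  · rw [search, dif_pos h1]
    exact .of_card_le_one h1 hpos hneg
  have hL : 0 < #(half C) ∧ 3 * #(half C) ≤ 2 * #C ∧ #(half C) < #C := by
    rw [card_half]; omega
  have hR : 0 < #(C \ half C) ∧ 2 * #(C \ half C) ≤ #C ∧ #(C \ half C) < #C := by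
    rw [card_sdiff_half]; omega
  have hLR : half C ∪ (C \ half C) = C := union_sdiff_of_subset (half_subset C)
  rw [search, dif_neg h1]
  cases hqL : a (ctx ∪ half C)
  · cases hqR : a (ctx ∪ (C \ half C))
    · have hsR := ih _ hR.2.2 (ctx ∪ half C) (C \ half C) (by rwa [union_assoc, hLR]) hqL rfl
      have hsL := ih _ hL.2.2 (ctx ∪ (search (ctx ∪ half C) (C \ half C)).eval a) (half C)
        (by rw [union_right_comm]; exact hsR.isMinimalOver.1)
        (ha.eq_false_of_le (union_subset_union_right hsR.subset) hqR) rfl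
      have := hsR.union ha disjoint_sdiff hsL
      rw [hLR] at this
      simpa [eval, cost, hqL, hqR, add_assoc] using this
    · have hlog := one_le_logb_two_div (c := #C) (d := #(C \ half C))
        (by exact_mod_cast hR.1) (by exact_mod_cast hR.2.1)
      have := (ih _ hR.2.2 ctx (C \ half C) hqR hneg rfl).of_subset sdiff_subset (c := 2)
        (by push_cast; linarith)
      simpa [eval, cost, hqL, hqR, add_assoc] using this
  · have hlog := half_le_logb_two_div (c := #C) (d := #(half C))
      (by exact_mod_cast hL.1) (by exact_mod_cast hL.2.1)
    have := (ih _ hL.2.2 ctx (half C) hqL hneg rfl).of_subset (half_subset C) (c := 1)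
      (by push_cast; linarith)
    simpa [eval, cost, hqL] using this

noncomputable def extract [Fintype α] : Query α (Finset α) :=
  ask ∅ fun b => if b then pure ∅ else search ∅ univ

theorem extract_spec [Fintype α] (ha : Monotone a) (huniv : a univ) :
    IsMinimalOver a ∅ (extract.eval a) ∧
      ∀ k : ℕ, 1 ≤ k → #(extract.eval a) ≤ k → k ≤ Fintype.card α →
        (extract.cost a : ℝ) ≤ 2 * k * (logb 2 (Fintype.card α / k) + 2) := by
  cases h0 : a ∅
  · have hs := search_spec ha ∅ univ (by simpa using huniv) h0
    simp only [extract, eval, cost, h0, Bool.false_eq_true, if_false]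
    refine ⟨hs.isMinimalOver, fun k hk hEk hkn => ?_⟩
    have hmono := searchBound_le_searchBound (s := Fintype.card α)
      (j := #(eval a (search ∅ univ))) (k := k)
      (by exact_mod_cast hs.nonempty.card_pos) (by exact_mod_cast hEk) (by exact_mod_cast hkn)
    have hb := hs.cost_le
    rw [card_univ] at hb
    have hb' := hb.trans hmono
    simp only [searchBound] at hb'
    push_cast
    linarith
  · simp only [extract, eval, cost, h0, if_true]
    refine ⟨⟨by simpa using h0, by simp⟩, fun k hk _ hkn => ?_⟩
    have hk' : (1 : ℝ) ≤ k := by exact_mod_cast hk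
    have hlog : 0 ≤ logb 2 (Fintype.card α / k) :=
      logb_nonneg one_lt_two ((one_le_div (by positivity)).2 (by exact_mod_cast hkn))
    nlinarith

end Query

lemma monotone_decide_exists_subset {α : Type*} [DecidableEq α] (F : Finset (Finset α)) :
    Monotone fun Y : Finset α => decide (∃ W ∈ F, W ⊆ Y) := by
  intro Y Z hYZ
  simp only [Bool.le_iff_imp, decide_eq_true_eq]
  exact fun ⟨W, hW, hWY⟩ => ⟨W, hW, hWY.trans hYZ⟩

lemma mem_of_isMinimalOver_empty {α : Type*} [DecidableEq α] {F : Finset (Finset α)}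
    {E : Finset α} (h : Query.IsMinimalOver (fun Y => decide (∃ W ∈ F, W ⊆ Y)) ∅ E) : E ∈ F := by
  obtain ⟨W, hW, hWE⟩ : ∃ W ∈ F, W ⊆ E := by simpa using h.1
  obtain rfl | ⟨x, hxE, hxW⟩ := hWE.eq_or_ssubset.imp id exists_of_ssubset
  · exact hW
  · have := h.2 x hxE
    simp only [empty_union, decide_eq_false_iff_not, not_exists, not_and] at this
    exact absurd (subset_erase.2 ⟨hWE, hxW⟩) (this W hW)

theorem deterministic_witness_extraction_general (n : ℕ) :
    ∃ σ : List Bool → WEAction n,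
      ∀ k : ℕ, 1 ≤ k → k ≤ n →
        ∀ F : Finset (Finset (Fin n)), F.Nonempty → (∀ W ∈ F, W.card ≤ k) →
          ∃ (m : ℕ) (W : Finset (Fin n)),
            σ (WEtranscript σ (fun Y => decide (∃ W' ∈ F, W' ⊆ Y)) m) =
                WEAction.halt W ∧
            W ∈ F ∧
            ((WEqueries σ (fun Y => decide (∃ W' ∈ F, W' ⊆ Y)) m).length : ℝ) ≤
              2 * k * (Real.logb 2 ((n : ℝ) / k) + 2) := by
  refine ⟨Query.extract.toStrategy, fun k hk hkn F ⟨W, hW⟩ hcard => ?_⟩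
  set a : Finset (Fin n) → Bool := fun Y => decide (∃ W' ∈ F, W' ⊆ Y)
  obtain ⟨hmin, hcost⟩ := Query.extract_spec (monotone_decide_exists_subset F)
    (a := a) (decide_eq_true ⟨W, hW, subset_univ W⟩)
  have hmem := mem_of_isMinimalOver_empty hmin
  obtain ⟨hhalt, hlen⟩ := Query.toStrategy_halt a Query.extract
  refine ⟨_, _, hhalt, hmem, ?_⟩
  rw [hlen]
  simpa using hcost k hk (hcard _ hmem) (by simpa using hkn)

/-- Theorem 1 (query-complexity part) / Lemma 1: for all `n ≥ k ≥ 1` there is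
a deterministic adaptive strategy `σ` depending only on `n` (not on `k` or on
the family) such that for every nonempty family `F` of subsets of `{1,…,n}`,
each of size at most `k`, running `σ` with each query `Y` answered by whether
some `W ∈ F` satisfies `W ⊆ Y` halts with output a member of `F` after at
most `2·k·(log₂(n/k) + 2)` queries. -/
theorem deterministic_witness_extraction (n : ℕ) (hn : 1 ≤ n) :
    ∃ σ : List Bool → WEAction n,
      ∀ k : ℕ, 1 ≤ k → k ≤ n →
        ∀ F : Finset (Finset (Fin n)), F.Nonempty → (∀ W ∈ F, W.card ≤ k) →
          ∃ (m : ℕ) (W : Finset (Fin n)),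
            σ (WEtranscript σ (fun Y => decide (∃ W' ∈ F, W' ⊆ Y)) m) =
                WEAction.halt W ∧
            W ∈ F ∧
            ((WEqueries σ (fun Y => decide (∃ W' ∈ F, W' ⊆ Y)) m).length : ℝ) ≤
              2 * k * (Real.logb 2 ((n : ℝ) / k) + 2) :=
  deterministic_witness_extraction_general n
end

section
/- There is an absolute constant c > 0 with the following property. For all integers n ≥ k ≥ 1 there exists a deterministic adaptive strategy σ (depending only on n) such that for every nonempty family F of subsets of {1,…,n} in which every member has at most k elements, and for every superadditive function g : ℕ → ℕ, the sequence of queries Y_1,…,Y_m made by σ when each query Y is answered by the truth value of "there exists W ∈ F with W ⊆ Y" satisfies ∑_{i=1}^m g(|Y_i|) ≤ c·k·g(2n), and σ halts with output a member of F. (Theorem 1, total-running-time part / Lemma 2, with oracle cost g(|Y|) per query of size |Y|.) -/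
/-!
The strategy keeps a current set `U` containing a witness, starting from the whole universe, and
sweeps the dyadic blocks of widths `2 ^ ⌊log₂ n⌋, …, 2, 1`: for each block `J` meeting `U` it asks
whether `U \ J` still contains a witness and, if so, replaces `U` by `U \ J`. After the round of
width `1` the set `U` is inclusion-minimal, hence a witness `W`.

A block that survives its round meets `W`, so at most `k` blocks of width `2w` survive; the round of
width `w` then makes at most `2k` queries, and at most `2n / w` of them, each of size at most
`min n (2kw)`. Summed over the rounds the query sizes total at most `12kn`. Finally, packing copies
of `s ≤ n` into `2n` shows `n · g s ≤ s · g (2n)` for superadditive `g`, so the total cost is at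
most `12k · g (2n)`.
-/

namespace WitnessSearch

variable {n : ℕ}

def step (a : Finset (Fin n) → Bool) (U J : Finset (Fin n)) : Finset (Fin n) :=
  if a (U \ J) then U \ J else U

def survivor (a : Finset (Fin n) → Bool) (U : Finset (Fin n)) (l : List (Finset (Fin n))) :
    Finset (Fin n) :=
  l.foldl (step a) U

def queries (a : Finset (Fin n) → Bool) :
    Finset (Fin n) → List (Finset (Fin n)) → List (Finset (Fin n))
  | _, [] => []
  | U, J :: l =>
    if (U ∩ J).Nonempty then (U \ J) :: queries a (step a U J) l else queries a U l

/-- `queries` as an adaptive strategy: the current set is recomputed from the answers so far. -/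
def play : Finset (Fin n) → List (Finset (Fin n)) → List Bool → WEAction n
  | U, [], _ => .halt U
  | U, J :: l, bs =>
    if (U ∩ J).Nonempty then
      match bs with
      | [] => .query (U \ J)
      | b :: bs => play (if b then U \ J else U) l bs
    else play U l bs

def oracle (F : Finset (Finset (Fin n))) (Y : Finset (Fin n)) : Bool :=
  decide (∃ W ∈ F, W ⊆ Y)

section Survivor

variable {a : Finset (Fin n) → Bool}

@[simp]
lemma survivor_cons (U J : Finset (Fin n)) (l : List (Finset (Fin n))) :
    survivor a U (J :: l) = survivor a (step a U J) l := rfl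

lemma survivor_append (U : Finset (Fin n)) (l₁ l₂ : List (Finset (Fin n))) :
    survivor a U (l₁ ++ l₂) = survivor a (survivor a U l₁) l₂ :=
  List.foldl_append

lemma step_subset (U J : Finset (Fin n)) : step a U J ⊆ U := by
  unfold step
  split
  · exact Finset.sdiff_subset
  · exact subset_rfl

lemma step_eq_self (U J : Finset (Fin n)) (h : ¬(U ∩ J).Nonempty) : step a U J = U := by
  rw [Finset.not_nonempty_iff_eq_empty, ← Finset.disjoint_iff_inter_eq_empty] at h
  simp [step, Finset.sdiff_eq_self_of_disjoint h]

lemma survivor_subset (U : Finset (Fin n)) (l : List (Finset (Fin n))) :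
    survivor a U l ⊆ U := by
  induction l generalizing U with
  | nil => exact subset_rfl
  | cons J l ih => exact (ih _).trans (step_subset U J)

lemma apply_survivor (U : Finset (Fin n)) (l : List (Finset (Fin n))) (hU : a U = true) :
    a (survivor a U l) = true := by
  induction l generalizing U with
  | nil => exact hU
  | cons J l ih =>
    apply ih
    unfold step
    split <;> assumption

/-- If the removal of `J` was accepted, the survivor avoids `J`; if it was rejected, monotonicity
passes the rejection on to the smaller survivor. -/
lemma apply_survivor_sdiff (ha : Monotone a) (U : Finset (Fin n)) {l : List (Finset (Fin n))}
    {J : Finset (Fin n)} (hJ : J ∈ l) (hSJ : (survivor a U l ∩ J).Nonempty) :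
    a (survivor a U l \ J) = false := by
  induction l generalizing U with
  | nil => simp at hJ
  | cons J' l ih =>
    rcases List.mem_cons.mp hJ with rfl | hJ
    · rw [survivor_cons] at hSJ ⊢
      have hS : survivor a (step a U J) l ⊆ step a U J := survivor_subset _ _
      by_cases hUJ : a (U \ J) = true
      · rw [step, if_pos hUJ] at hS hSJ
        obtain ⟨x, hx⟩ := hSJ
        rw [Finset.mem_inter] at hx
        exact absurd hx.2 (Finset.mem_sdiff.mp (hS hx.1)).2
      · rw [step, if_neg hUJ] at hS ⊢
        rw [Bool.not_eq_true] at hUJ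
        exact Bool.eq_false_of_le_false
          (hUJ ▸ ha (Finset.sdiff_subset_sdiff hS (subset_refl J)))
    · exact ih _ hJ hSJ

end Survivor

section Oracle

variable {F : Finset (Finset (Fin n))}

lemma oracle_eq_true {Y : Finset (Fin n)} : oracle F Y = true ↔ ∃ W ∈ F, W ⊆ Y :=
  decide_eq_true_iff

lemma oracle_monotone : Monotone (oracle F) := by
  intro X Y hXY
  by_cases hX : oracle F X = true
  · obtain ⟨W, hW, hWX⟩ := oracle_eq_true.mp hX
    rw [oracle_eq_true.mpr ⟨W, hW, hWX.trans hXY⟩]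
    exact le_top
  · rw [Bool.not_eq_true] at hX
    rw [hX]
    exact bot_le

lemma inter_nonempty_of_subset_survivor {W U J : Finset (Fin n)} {l : List (Finset (Fin n))}
    (hW : W ∈ F) (hWS : W ⊆ survivor (oracle F) U l) (hJ : J ∈ l)
    (hSJ : (survivor (oracle F) U l ∩ J).Nonempty) : (W ∩ J).Nonempty := by
  by_contra hWJ
  rw [Finset.not_nonempty_iff_eq_empty, ← Finset.disjoint_iff_inter_eq_empty] at hWJ
  have : oracle F (survivor (oracle F) U l \ J) = true :=
    oracle_eq_true.mpr ⟨W, hW, Finset.subset_sdiff.mpr ⟨hWS, hWJ⟩⟩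
  rw [apply_survivor_sdiff oracle_monotone U hJ hSJ] at this
  exact Bool.false_ne_true this

/-- Trying every singleton makes the survivor an inclusion-minimal accepted set. -/
lemma survivor_mem (hF : F.Nonempty) {l : List (Finset (Fin n))}
    (hl : ∀ x : Fin n, {x} ∈ l) : survivor (oracle F) Finset.univ l ∈ F := by
  obtain ⟨W₀, hW₀⟩ := hF
  obtain ⟨W, hW, hWS⟩ := oracle_eq_true.mp <|
    apply_survivor (a := oracle F) Finset.univ l
      (oracle_eq_true.mpr ⟨W₀, hW₀, Finset.subset_univ W₀⟩)
  have hSW : survivor (oracle F) Finset.univ l ⊆ W := fun x hx => by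
    obtain ⟨y, hy⟩ := inter_nonempty_of_subset_survivor hW hWS (hl x)
      ⟨x, Finset.mem_inter.mpr ⟨hx, Finset.mem_singleton_self x⟩⟩
    rw [Finset.mem_inter, Finset.mem_singleton] at hy
    exact hy.2 ▸ hy.1
  rwa [Finset.Subset.antisymm hSW hWS]

end Oracle

def block (n w j : ℕ) : Finset (Fin n) := {x | x.val / w = j}

def blocks (n w : ℕ) : List (Finset (Fin n)) := (List.range n).map (block n w)

/-- Blocks of widths `2 ^ (m - 1), …, 2, 1`, coarsest first. -/
def schedule (n : ℕ) : ℕ → List (Finset (Fin n))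
  | 0 => []
  | m + 1 => blocks n (2 ^ m) ++ schedule n m

lemma singleton_mem_schedule (x : Fin n) (m : ℕ) : {x} ∈ schedule n (m + 1) := by
  induction m with
  | zero =>
    have : block n 1 x = {x} := by ext y; simp [block, Fin.ext_iff]
    exact List.mem_append_left _ (List.mem_map.mpr ⟨x, List.mem_range.mpr x.isLt, this⟩)
  | succ m ih => exact List.mem_append_right _ ih

section Play

variable (a : Finset (Fin n) → Bool)

lemma play_map_queries (U : Finset (Fin n)) (l : List (Finset (Fin n))) :
    play U l ((queries a U l).map a) = .halt (survivor a U l) := by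
  induction l generalizing U with
  | nil => rfl
  | cons J l ih =>
    by_cases h : (U ∩ J).Nonempty
    · simpa [queries, play, h, step] using ih (step a U J)
    · simpa [queries, play, h, step_eq_self U J h] using ih U

lemma play_take_map_queries (U : Finset (Fin n)) (l : List (Finset (Fin n))) (i : ℕ)
    (hi : i < (queries a U l).length) :
    play U l (((queries a U l).map a).take i) = .query ((queries a U l)[i]) := by
  induction l generalizing U i with
  | nil => simp [queries] at hi
  | cons J l ih =>
    by_cases h : (U ∩ J).Nonempty
    · simp only [queries, h, if_true] at hi ⊢
      cases i with
      | zero => simp [play, h]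
      | succ i => simpa [play, h, step] using ih (step a U J) i (by simpa using hi)
    · simp only [queries, h, if_false] at hi ⊢
      simpa [play, h] using ih U i hi

end Play

lemma transcript_queries_eq {σ : List Bool → WEAction n} {a : Finset (Fin n) → Bool}
    {qs : List (Finset (Fin n))}
    (hσ : ∀ i (hi : i < qs.length), σ ((qs.map a).take i) = .query qs[i]) :
    ∀ i ≤ qs.length, WEtranscript σ a i = (qs.map a).take i ∧ WEqueries σ a i = qs.take i
  | 0, _ => ⟨rfl, rfl⟩
  | i + 1, hi => by
    obtain ⟨ht, hq⟩ := transcript_queries_eq hσ i (by omega)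
    simp only [WEtranscript, WEqueries, ht, hq, hσ i (by omega)]
    have hi' : i < qs.length := by omega
    constructor
    · rw [List.take_add_one, List.getElem?_map, List.getElem?_eq_getElem hi']
      rfl
    · rw [List.take_add_one, List.getElem?_eq_getElem hi']
      rfl

lemma play_run (a : Finset (Fin n) → Bool) (U : Finset (Fin n)) (l : List (Finset (Fin n))) :
    play U l (WEtranscript (play U l) a (queries a U l).length) = .halt (survivor a U l) ∧
      WEqueries (play U l) a (queries a U l).length = queries a U l := by
  obtain ⟨ht, hq⟩ := transcript_queries_eq (play_take_map_queries a U l) _ le_rfl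
  rw [ht, hq, List.take_of_length_le (by simp), List.take_of_length_le le_rfl]
  exact ⟨play_map_queries a U l, rfl⟩

def blockCount (U : Finset (Fin n)) (w : ℕ) : ℕ := (U.image fun x => x.val / w).card

section BlockCount

variable (U : Finset (Fin n)) (w : ℕ)

lemma card_le_blockCount_mul (hw : 0 < w) : U.card ≤ blockCount U w * w := by
  rw [blockCount, mul_comm]
  refine Finset.card_le_mul_card_image U w fun j _ => ?_
  calc ({x ∈ U | x.val / w = j}).card
      = (({x ∈ U | x.val / w = j}).map Fin.valEmbedding).card := (Finset.card_map _).symm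
    _ ≤ (Finset.Ico (j * w) (j * w + w)).card := Finset.card_le_card fun y hy => by
        obtain ⟨x, hx, rfl⟩ := Finset.mem_map.mp hy
        have hxj := (Finset.mem_filter.mp hx).2
        have := Nat.div_add_mod x.val w
        have := Nat.mod_lt x.val hw
        rw [Finset.mem_Ico, Fin.valEmbedding_apply, ← hxj, mul_comm]
        omega
    _ = w := by simp

lemma blockCount_le_two_mul : blockCount U w ≤ 2 * blockCount U (w * 2) := by
  have himage : (U.image fun x => x.val / w).image (· / 2) = U.image fun x => x.val / (w * 2) := by
    rw [Finset.image_image]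
    simp [Function.comp_def, Nat.div_div_eq_div_mul]
  rw [blockCount, blockCount, ← himage]
  refine Finset.card_le_mul_card_image _ 2 fun b _ => ?_
  calc ({j ∈ U.image fun x => x.val / w | j / 2 = b}).card
      ≤ ({2 * b, 2 * b + 1} : Finset ℕ).card := Finset.card_le_card fun j hj => by
        have := (Finset.mem_filter.mp hj).2
        simp only [Finset.mem_insert, Finset.mem_singleton]
        omega
    _ ≤ 2 := Finset.card_le_two

lemma blockCount_mul_le (hw : w ≤ n) : blockCount U w * w ≤ 2 * n := by
  have hcount : blockCount U w ≤ n / w + 1 := by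
    calc blockCount U w ≤ (Finset.range (n / w + 1)).card :=
          Finset.card_le_card fun j hj => by
            obtain ⟨x, _, rfl⟩ := Finset.mem_image.mp hj
            exact Finset.mem_range.mpr (Nat.lt_succ_of_le (Nat.div_le_div_right x.isLt.le))
      _ = n / w + 1 := Finset.card_range _
  calc blockCount U w * w ≤ (n / w + 1) * w := Nat.mul_le_mul_right w hcount
    _ = n / w * w + w := by ring
    _ ≤ 2 * n := by have := Nat.div_mul_le_self n w; omega

lemma blockCount_le_one (hw : n ≤ w) : blockCount U w ≤ 1 :=
  Finset.card_le_one.mpr fun i hi j hj => by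
    obtain ⟨x, _, rfl⟩ := Finset.mem_image.mp hi
    obtain ⟨y, _, rfl⟩ := Finset.mem_image.mp hj
    rw [Nat.div_eq_of_lt (x.isLt.trans_le hw), Nat.div_eq_of_lt (y.isLt.trans_le hw)]

lemma blockCount_le_card : blockCount U w ≤ U.card := Finset.card_image_le

end BlockCount

section Queries

variable {a : Finset (Fin n) → Bool}

lemma queries_append (U : Finset (Fin n)) (l₁ l₂ : List (Finset (Fin n))) :
    queries a U (l₁ ++ l₂) = queries a U l₁ ++ queries a (survivor a U l₁) l₂ := by
  induction l₁ generalizing U with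
  | nil => rfl
  | cons J l ih =>
    by_cases h : (U ∩ J).Nonempty
    · simp [queries, h, ih]
    · simp [queries, h, ih, step_eq_self U J h]

lemma subset_of_mem_queries {U Y : Finset (Fin n)} {l : List (Finset (Fin n))}
    (hY : Y ∈ queries a U l) : Y ⊆ U := by
  induction l generalizing U with
  | nil => simp [queries] at hY
  | cons J l ih =>
    by_cases h : (U ∩ J).Nonempty
    · simp only [queries, h, if_true, List.mem_cons] at hY
      rcases hY with rfl | hY
      · exact Finset.sdiff_subset
      · exact (ih hY).trans (step_subset U J)
    · simp only [queries, h, if_false] at hY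
      exact ih hY

lemma sum_card_queries_le (U : Finset (Fin n)) (l : List (Finset (Fin n))) :
    ((queries a U l).map Finset.card).sum ≤ (queries a U l).length * U.card := by
  simpa using List.sum_le_card_nsmul ((queries a U l).map Finset.card) U.card fun s hs => by
    obtain ⟨Y, hY, rfl⟩ := List.mem_map.mp hs
    exact Finset.card_le_card (subset_of_mem_queries hY)

lemma length_queries_le_countP (U : Finset (Fin n)) (l : List (Finset (Fin n))) :
    (queries a U l).length ≤ l.countP fun J => (U ∩ J).Nonempty := by
  induction l generalizing U with
  | nil => rfl
  | cons J l ih =>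
    by_cases h : (U ∩ J).Nonempty
    · have hmono : l.countP (fun J' => (step a U J ∩ J').Nonempty) ≤
          l.countP fun J' => (U ∩ J').Nonempty :=
        List.countP_mono_left fun J' _ hJ' => by
          simpa using (of_decide_eq_true hJ').mono
            (Finset.inter_subset_inter_right (step_subset U J))
      simpa [queries, h, List.countP_cons] using (ih (step a U J)).trans hmono
    · simpa [queries, h, List.countP_cons] using ih U

lemma length_queries_blocks_le (U : Finset (Fin n)) (w : ℕ) :
    (queries a U (blocks n w)).length ≤ blockCount U w := by
  refine (length_queries_le_countP U _).trans ?_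
  rw [blocks, List.countP_map, List.countP_eq_length_filter,
    ← List.toFinset_card_of_nodup (List.nodup_range.filter _)]
  refine Finset.card_le_card fun j hj => ?_
  obtain ⟨x, hx⟩ : (U ∩ block n w j).Nonempty := by simpa using (List.mem_filter.mp
    (List.mem_toFinset.mp hj)).2
  rw [Finset.mem_inter, block, Finset.mem_filter] at hx
  exact Finset.mem_image.mpr ⟨x, hx.1, hx.2.2⟩

end Queries

/-- A block that survives a round must meet every witness that survives it. -/
lemma blockCount_survivor_le {F : Finset (Finset (Fin n))} {U W : Finset (Fin n)} {w : ℕ}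
    (hW : W ∈ F) (hWS : W ⊆ survivor (oracle F) U (blocks n w)) :
    blockCount (survivor (oracle F) U (blocks n w)) w ≤ blockCount W w := by
  refine Finset.card_le_card fun j hj => ?_
  obtain ⟨x, hx, rfl⟩ := Finset.mem_image.mp hj
  have hJ : block n w (x.val / w) ∈ blocks n w :=
    List.mem_map.mpr ⟨_, List.mem_range.mpr ((Nat.div_le_self _ _).trans_lt x.isLt), rfl⟩
  obtain ⟨y, hy⟩ := inter_nonempty_of_subset_survivor hW hWS hJ
    ⟨x, Finset.mem_inter.mpr ⟨hx, by simp [block]⟩⟩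
  rw [Finset.mem_inter, block, Finset.mem_filter] at hy
  exact Finset.mem_image.mpr ⟨y, hy.1, hy.2.2⟩

lemma sum_card_queries_blocks_le {a : Finset (Fin n) → Bool} (U : Finset (Fin n)) {w k : ℕ}
    (hw : 0 < w) (hwn : w ≤ n) (hU : blockCount U (w * 2) ≤ k) :
    ((queries a U (blocks n w)).map Finset.card).sum ≤ min (4 * k ^ 2 * w) (2 * n / w * n) := by
  have hlen := length_queries_blocks_le (a := a) U w
  refine (sum_card_queries_le U _).trans (le_min ?_ ?_)
  · have hcard := card_le_blockCount_mul U (w * 2) (by omega)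
    calc (queries a U (blocks n w)).length * U.card ≤ (2 * k) * (k * (w * 2)) :=
          Nat.mul_le_mul (by linarith [blockCount_le_two_mul U w])
            (hcard.trans (Nat.mul_le_mul_right _ hU))
      _ = 4 * k ^ 2 * w := by ring
  · refine Nat.mul_le_mul ((Nat.le_div_iff_mul_le hw).mpr ?_) ?_
    · exact (Nat.mul_le_mul_right w hlen).trans (blockCount_mul_le U w hwn)
    · simpa using Finset.card_le_univ U

lemma sum_card_queries_schedule_le {F : Finset (Finset (Fin n))} {W : Finset (Fin n)} {k : ℕ}
    (hW : W ∈ F) (hWk : W.card ≤ k) (m : ℕ) (U : Finset (Fin n)) (hm : 2 ^ m ≤ 2 * n)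
    (hU : blockCount U (2 ^ m) ≤ k) (hWS : W ⊆ survivor (oracle F) U (schedule n m)) :
    ((queries (oracle F) U (schedule n m)).map Finset.card).sum ≤
      ∑ j ∈ Finset.range m, min (4 * k ^ 2 * 2 ^ j) (2 * n / 2 ^ j * n) := by
  induction m generalizing U with
  | zero => simp [schedule, queries]
  | succ m ih =>
    rw [schedule, survivor_append] at hWS
    set V := survivor (oracle F) U (blocks n (2 ^ m))
    have hV : blockCount V (2 ^ m) ≤ k :=
      (blockCount_survivor_le hW (hWS.trans (survivor_subset _ _))).trans
        ((blockCount_le_card W _).trans hWk)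
    rw [pow_succ] at hm hU
    rw [schedule, queries_append, List.map_append, List.sum_append, Finset.sum_range_succ,
      add_comm (Finset.sum _ _)]
    exact Nat.add_le_add (sum_card_queries_blocks_le U (by positivity) (by omega) hU)
      (ih V (by omega) hV hWS)

lemma sum_div_two_pow_le (D L : ℕ) : ∑ i ∈ Finset.range L, D / 2 ^ i ≤ 2 * D := by
  induction L generalizing D with
  | zero => simp
  | succ L ih =>
    rw [Finset.sum_range_succ']
    simp only [pow_succ', ← Nat.div_div_eq_div_mul, pow_zero, Nat.div_one]
    have := ih (D / 2)
    omega

/-- Splitting at the level `2 ^ j ≈ n / k`: below it the first term of the minimum grows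
geometrically, above it the second one decays geometrically. -/
lemma sum_min_le (k n R : ℕ) (hk : 0 < k) :
    ∑ j ∈ Finset.range R, min (4 * k ^ 2 * 2 ^ j) (2 * n / 2 ^ j * n) ≤ 12 * k * n := by
  set m₀ := Nat.log 2 (n / k)
  have hlow : ∑ j ∈ Finset.range m₀, 2 ^ j ≤ n / k := by
    rcases Nat.eq_zero_or_pos m₀ with h | h
    · simp [h]
    · have hnk : n / k ≠ 0 := fun h0 => by simp [m₀, h0] at h
      exact (Nat.geomSum_lt le_rfl fun j hj => Finset.mem_range.mp hj).le.trans
        (Nat.pow_log_le_self 2 hnk)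
  have hhigh : 2 * n / 2 ^ m₀ < 4 * k := by
    have hn : n < 2 ^ m₀ * 2 * k := by
      rw [← pow_succ]
      exact (Nat.div_lt_iff_lt_mul hk).mp (Nat.lt_pow_succ_log_self one_lt_two (n / k))
    rw [Nat.div_lt_iff_lt_mul (by positivity)]
    linarith
  calc ∑ j ∈ Finset.range R, min (4 * k ^ 2 * 2 ^ j) (2 * n / 2 ^ j * n)
      ≤ ∑ j ∈ Finset.range (m₀ + R), min (4 * k ^ 2 * 2 ^ j) (2 * n / 2 ^ j * n) :=
        Finset.sum_le_sum_of_subset (Finset.range_subset_range.mpr (by omega))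
    _ = ∑ j ∈ Finset.range m₀, min (4 * k ^ 2 * 2 ^ j) (2 * n / 2 ^ j * n) +
        ∑ i ∈ Finset.range R, min (4 * k ^ 2 * 2 ^ (m₀ + i)) (2 * n / 2 ^ (m₀ + i) * n) :=
        Finset.sum_range_add _ _ _
    _ ≤ ∑ j ∈ Finset.range m₀, 4 * k ^ 2 * 2 ^ j +
        ∑ i ∈ Finset.range R, 2 * n / 2 ^ m₀ / 2 ^ i * n := by
        gcongr with j _ i _
        · exact min_le_left _ _
        · rw [Nat.div_div_eq_div_mul, ← pow_add]
          exact min_le_right _ _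
    _ ≤ 4 * k ^ 2 * (n / k) + 2 * (2 * n / 2 ^ m₀) * n := by
        rw [← Finset.mul_sum, ← Finset.sum_mul]
        exact Nat.add_le_add (Nat.mul_le_mul_left _ hlow)
          (Nat.mul_le_mul_right _ (sum_div_two_pow_le _ _))
    _ ≤ 4 * k * n + 2 * (4 * k) * n := by
        have hlow' : 4 * k ^ 2 * (n / k) ≤ 4 * k * n := by
          calc 4 * k ^ 2 * (n / k) = 4 * k * (k * (n / k)) := by ring
            _ ≤ 4 * k * n := Nat.mul_le_mul_left _ (Nat.mul_div_le n k)
        have hhigh' : 2 * (2 * n / 2 ^ m₀) * n ≤ 2 * (4 * k) * n := by gcongr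
        omega
    _ = 12 * k * n := by ring

section Superadditive

variable {g : ℕ → ℕ} (hg : ∀ a b, g a + g b ≤ g (a + b))
include hg

lemma map_zero_of_superadditive : g 0 = 0 := by
  have := hg 0 0
  rw [add_zero] at this
  omega

lemma monotone_of_superadditive : Monotone g := fun a b hab => by
  have := hg a (b - a)
  rw [Nat.add_sub_cancel' hab] at this
  omega

lemma mul_le_of_superadditive (q s : ℕ) : q * g s ≤ g (q * s) := by
  induction q with
  | zero => simp
  | succ q ih =>
    calc (q + 1) * g s = q * g s + g s := by ring
      _ ≤ g (q * s) + g s := by omega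
      _ ≤ g ((q + 1) * s) := by rw [add_mul, one_mul]; exact hg _ _

/-- Packing `⌊2n/s⌋ ≥ n/s` copies of `s` into `2n` shows that `g s / s ≤ g (2n) / n`. -/
lemma mul_le_mul_of_superadditive {n s : ℕ} (hs : s ≤ n) : n * g s ≤ s * g (2 * n) := by
  rcases Nat.eq_zero_or_pos s with rfl | hs0
  · simp [map_zero_of_superadditive hg]
  have hqs : n ≤ 2 * n / s * s := by
    have := Nat.div_add_mod' (2 * n) s
    have := Nat.mod_lt (2 * n) hs0
    linarith
  calc n * g s ≤ 2 * n / s * s * g s := Nat.mul_le_mul_right _ hqs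
    _ = s * (2 * n / s * g s) := by ring
    _ ≤ s * g (2 * n) := Nat.mul_le_mul_left _ <| (mul_le_of_superadditive hg _ s).trans
        (monotone_of_superadditive hg (Nat.div_mul_le_self _ _))

lemma mul_sum_map_le_of_superadditive {n : ℕ} (l : List ℕ) (hl : ∀ s ∈ l, s ≤ n) :
    n * (l.map g).sum ≤ l.sum * g (2 * n) := by
  calc n * (l.map g).sum = (l.map fun s => n * g s).sum := (List.sum_map_mul_left _ _ _).symm
    _ ≤ (l.map fun s => s * g (2 * n)).sum :=
        List.sum_le_sum fun s hs => mul_le_mul_of_superadditive hg (hl s hs)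
    _ = l.sum * g (2 * n) := by rw [List.sum_map_mul_right, List.map_id']

end Superadditive

def strategy (n : ℕ) : List Bool → WEAction n :=
  play Finset.univ (schedule n (Nat.log 2 n + 1))

theorem strategy_spec {n k : ℕ} (hn : 0 < n) (hk : 0 < k) {F : Finset (Finset (Fin n))}
    (hF : F.Nonempty) (hFk : ∀ W ∈ F, W.card ≤ k) {g : ℕ → ℕ}
    (hg : ∀ a b, g a + g b ≤ g (a + b)) :
    ∃ m, ∃ W ∈ F, strategy n (WEtranscript (strategy n) (oracle F) m) = .halt W ∧
      ((WEqueries (strategy n) (oracle F) m).map fun Y => g Y.card).sum ≤ 12 * k * g (2 * n) := by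
  unfold strategy
  set R := Nat.log 2 n + 1
  set S := survivor (oracle F) Finset.univ (schedule n R)
  set qs := queries (oracle F) Finset.univ (schedule n R)
  have hS : S ∈ F := survivor_mem hF fun x => singleton_mem_schedule x _
  obtain ⟨hhalt, hqueries⟩ := play_run (oracle F) Finset.univ (schedule n R)
  refine ⟨qs.length, S, hS, hhalt, ?_⟩
  have hR : 2 ^ R ≤ 2 * n := by
    rw [pow_succ, mul_comm]
    exact Nat.mul_le_mul_left 2 (Nat.pow_log_le_self 2 hn.ne')
  have hsize : (qs.map Finset.card).sum ≤ 12 * k * n :=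
    (sum_card_queries_schedule_le hS (hFk S hS) R Finset.univ hR
      ((blockCount_le_one _ _ (Nat.lt_pow_succ_log_self one_lt_two n).le).trans hk)
      subset_rfl).trans (sum_min_le k n R hk)
  have hcost := mul_sum_map_le_of_superadditive hg (qs.map Finset.card) fun s hs => by
    obtain ⟨Y, -, rfl⟩ := List.mem_map.mp hs
    simpa using Finset.card_le_univ Y
  rw [List.map_map] at hcost
  rw [hqueries]
  refine Nat.le_of_mul_le_mul_left ?_ hn
  calc n * (qs.map fun Y => g Y.card).sum ≤ (qs.map Finset.card).sum * g (2 * n) := hcost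
    _ ≤ 12 * k * n * g (2 * n) := Nat.mul_le_mul_right _ hsize
    _ = n * (12 * k * g (2 * n)) := by ring

end WitnessSearch

/-- Theorem 1 (total-running-time part) / Lemma 2: there is an absolute
constant `c > 0` such that for all `n ≥ k ≥ 1` there is a deterministic
adaptive strategy `σ` depending only on `n` such that for every nonempty
family `F` of subsets of `{1,…,n}`, each of size at most `k`, and every
superadditive `g : ℕ → ℕ`, running `σ` with each query `Y` answered by
whether some `W ∈ F` satisfies `W ⊆ Y` halts with output a member of `F`,
and the queries `Y_1, …, Y_m` made satisfy `∑ i, g |Y_i| ≤ c·k·g(2n)`. -/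
theorem deterministic_witness_extraction_runtime :
    ∃ c : ℝ, 0 < c ∧
      ∀ n : ℕ, 1 ≤ n →
        ∃ σ : List Bool → WEAction n,
          ∀ k : ℕ, 1 ≤ k → k ≤ n →
            ∀ F : Finset (Finset (Fin n)), F.Nonempty →
              (∀ W ∈ F, W.card ≤ k) →
              ∀ g : ℕ → ℕ, (∀ a b : ℕ, g a + g b ≤ g (a + b)) →
                ∃ (m : ℕ) (W : Finset (Fin n)),
                  σ (WEtranscript σ (fun Y => decide (∃ W' ∈ F, W' ⊆ Y)) m) =
                      WEAction.halt W ∧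
                  W ∈ F ∧
                  (((WEqueries σ (fun Y => decide (∃ W' ∈ F, W' ⊆ Y)) m).map
                      (fun Y => g Y.card)).sum : ℝ) ≤
                    c * k * g (2 * n) := by
  refine ⟨12, by norm_num, fun n hn => ⟨WitnessSearch.strategy n, fun k hk _ F hF hFk g hg => ?_⟩⟩
  obtain ⟨m, W, hW, hhalt, hcost⟩ := WitnessSearch.strategy_spec hn hk hF hFk hg
  exact ⟨m, W, hhalt, hW, by exact_mod_cast hcost⟩
end

section
/- Let n and k be integers with 1 ≤ k ≤ n, let t ≤ k be a positive integer, and let S_1,…,S_t be pairwise disjoint nonempty finite sets with |S_1| + ⋯ + |S_t| ≤ n. Then ∑_{i=1}^t ⌈log₂ |S_i|⌉ ≤ k·(log₂(n/k) + 1). (The counting step in the proof of Lemma 1 bounding the total number of cut nodes.) -/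
/-!
Only sets of size `s ≥ 2` contribute, and each contributes `⌈log₂ s⌉ ≤ log₂ (2s)`. If `a` sets
contribute, concavity of `log` bounds the total by `a log₂ (2n/a)`, and `a ≤ n/2` because their
sizes sum to at most `n`. Finally `x ↦ x log (2n/x) = 2n · negMulLog (x/2n)` is increasing up to
`x = n/2`, and its value at every `x ∈ [n/2, n]` is at least its value at `n/2`, since the concave
function `negMulLog` takes the same value at `1/4` and `1/2`; as `a ≤ k ≤ n`, this gives
`a log₂ (2n/a) ≤ k log₂ (2n/k)`.
-/

open Real Finset

lemma negMulLog_le_negMulLog {a b : ℝ} (ha : 0 ≤ a) (hab : a ≤ b) (ha' : a ≤ 1 / 4)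
    (hb : b ≤ 1 / 2) : negMulLog a ≤ negMulLog b := by
  have hf := concaveOn_negMulLog
  have hq : negMulLog (1 / 4) = negMulLog (1 / 2) := by
    rw [show (1 / 4 : ℝ) = 1 / 2 * (1 / 2) by norm_num, negMulLog_mul]; ring
  have h₀ : ∀ {x : ℝ}, 0 ≤ x → x ∈ Set.Ici 0 := id
  have ha4 : negMulLog a ≤ negMulLog (1 / 4) :=
    hf.left_le_of_le_right'' (h₀ ha) (h₀ (by norm_num)) ha' (by norm_num) hq.le
  rcases lt_or_ge b (1 / 4) with hb4 | hb4
  · have hb4' : negMulLog b ≤ negMulLog (1 / 4) :=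
      hf.left_le_of_le_right'' (h₀ (ha.trans hab)) (h₀ (by norm_num)) hb4.le (by norm_num) hq.le
    exact hf.left_le_of_le_right'' (h₀ ha) (h₀ (by norm_num)) hab hb4 hb4'
  · refine ha4.trans ?_
    have := hf.ge_on_segment (x := 1 / 4) (y := 1 / 2) (h₀ (by norm_num)) (h₀ (by norm_num))
      (z := b) (by rw [segment_eq_Icc (by norm_num)]; exact ⟨hb4, hb⟩)
    rwa [hq, min_self, ← hq] at this

lemma mul_log_div_le_mul_log_div {a k N : ℝ} (hN : 0 < N) (ha : 0 ≤ a) (hak : a ≤ k)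
    (ha' : 4 * a ≤ N) (hk : 2 * k ≤ N) : a * log (N / a) ≤ k * log (N / k) := by
  have key : ∀ x, x * log (N / x) = N * negMulLog (x / N) := fun x => by
    rw [negMulLog, ← inv_div, log_inv]; field_simp
  rw [key, key]
  refine mul_le_mul_of_nonneg_left (negMulLog_le_negMulLog (by positivity)
    (div_le_div_of_nonneg_right hak hN.le) ?_ ?_) hN.le
  · rw [div_le_iff₀ hN]; linarith
  · rw [div_le_iff₀ hN]; linarith

lemma sum_log_le_card_mul_log_div {ι : Type*} {s : Finset ι} {f : ι → ℝ} {N : ℝ}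
    (hf : ∀ i ∈ s, 0 < f i) (hN : ∑ i ∈ s, f i ≤ N) :
    ∑ i ∈ s, log (f i) ≤ #s * log (N / #s) := by
  rcases s.eq_empty_or_nonempty with rfl | hs
  · simp
  have hc : (0 : ℝ) < #s := by exact_mod_cast hs.card_pos
  have jensen := (strictConcaveOn_log_Ioi.concaveOn).le_map_sum (t := s) (p := f)
    (w := fun _ => (#s : ℝ)⁻¹) (fun _ _ => by positivity) (by simp [hc.ne']) hf
  simp only [smul_eq_mul, ← div_eq_inv_mul, ← sum_div] at jensen
  calc ∑ i ∈ s, log (f i) = #s * ((∑ i ∈ s, log (f i)) / #s) := by field_simp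
    _ ≤ #s * log ((∑ i ∈ s, f i) / #s) := by gcongr
    _ ≤ #s * log (N / #s) := by
      gcongr
      exact div_pos (sum_pos hf hs) hc

lemma sum_log_two_mul_le {ι : Type*} {A : Finset ι} {x : ι → ℝ} {k N : ℝ}
    (hx : ∀ i ∈ A, 2 ≤ x i) (hAk : #A ≤ k) (hkN : k ≤ N) (hN : 0 < N)
    (hsum : ∑ i ∈ A, x i ≤ N) : ∑ i ∈ A, log (2 * x i) ≤ k * log (2 * N / k) := by
  have h2A : 2 * (#A : ℝ) ≤ ∑ i ∈ A, x i := by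
    simpa [mul_comm] using card_nsmul_le_sum A x 2 hx
  calc ∑ i ∈ A, log (2 * x i) ≤ #A * log (2 * N / #A) :=
        sum_log_le_card_mul_log_div (fun i hi => by linarith [hx i hi])
          (by rw [← mul_sum]; linarith)
    _ ≤ k * log (2 * N / k) :=
        mul_log_div_le_mul_log_div (by positivity) (by positivity) hAk (by linarith) (by linarith)

lemma ceil_logb_le_logb_mul {b x : ℝ} (hb : 1 < b) (hx : 0 < x) :
    (⌈logb b x⌉ : ℝ) ≤ logb b (b * x) := by
  rw [logb_mul (by positivity) hx.ne', logb_self_eq_one hb, add_comm]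
  exact (Int.ceil_lt_add_one _).le

theorem sum_ceil_log_card_le_general (n k t : ℕ) (hk : 1 ≤ k) (hkn : k ≤ n)
    (htk : t ≤ k) (S : Fin t → Finset ℕ)
    (hsum : ∑ i, (S i).card ≤ n) :
    ((∑ i, ⌈Real.logb 2 ((S i).card : ℝ)⌉ : ℤ) : ℝ) ≤
      (k : ℝ) * (Real.logb 2 ((n : ℝ) / k) + 1) := by
  set A := univ.filter fun i => 2 ≤ #(S i)
  have hvanish : ∀ i ∈ univ, ⌈logb 2 (#(S i) : ℝ)⌉ ≠ 0 → 2 ≤ #(S i) := fun i _ h => by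
    by_contra! h2
    interval_cases #(S i) <;> simp at h
  have hA2 : ∀ i ∈ A, (2 : ℝ) ≤ #(S i) := fun i hi => by exact_mod_cast (mem_filter.1 hi).2
  have hAk : (#A : ℝ) ≤ k := by exact_mod_cast (card_filter_le _ _).trans (by simpa using htk)
  have hAn : ∑ i ∈ A, (#(S i) : ℝ) ≤ n := by
    exact_mod_cast (sum_le_sum_of_subset (filter_subset _ _)).trans hsum
  have hk0 : (0 : ℝ) < k := by exact_mod_cast hk
  have hn : (0 : ℝ) < n := by exact_mod_cast hk.trans hkn
  calc ((∑ i, ⌈logb 2 (#(S i) : ℝ)⌉ : ℤ) : ℝ) = ∑ i ∈ A, (⌈logb 2 (#(S i) : ℝ)⌉ : ℝ) := by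
        rw [← sum_filter_of_ne hvanish, Int.cast_sum]
    _ ≤ ∑ i ∈ A, logb 2 (2 * #(S i)) :=
        sum_le_sum fun i hi => ceil_logb_le_logb_mul one_lt_two (by linarith [hA2 i hi])
    _ = (∑ i ∈ A, log (2 * #(S i))) / log 2 := by simp only [logb, sum_div]
    _ ≤ k * log (2 * n / k) / log 2 := by
        gcongr ?_ / _
        exact sum_log_two_mul_le hA2 hAk (by exact_mod_cast hkn) hn hAn
    _ = k * (logb 2 (n / k) + 1) := by
        rw [mul_div_assoc (2 : ℝ), log_mul two_ne_zero (by positivity), logb]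
        field_simp
        ring

/-- The counting step in the proof of Lemma 1 bounding the total number of cut
nodes: if `S_1, …, S_t` are pairwise disjoint nonempty finite sets whose total
size is at most `n`, with `1 ≤ t ≤ k ≤ n`, then
`∑_{i=1}^t ⌈log₂ |S_i|⌉ ≤ k·(log₂(n/k) + 1)`. -/
theorem sum_ceil_log_card_le (n k t : ℕ) (hk : 1 ≤ k) (hkn : k ≤ n)
    (ht : 1 ≤ t) (htk : t ≤ k) (S : Fin t → Finset ℕ)
    (hne : ∀ i, (S i).Nonempty)
    (hdisj : ∀ i j, i ≠ j → Disjoint (S i) (S j))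
    (hsum : ∑ i, (S i).card ≤ n) :
    ((∑ i, ⌈Real.logb 2 ((S i).card : ℝ)⌉ : ℤ) : ℝ) ≤
      (k : ℝ) * (Real.logb 2 ((n : ℝ) / k) + 1) :=
  sum_ceil_log_card_le_general n k t hk hkn htk S hsum
end

section
/- Let k ≥ 1 be an integer, let F be a family of finite sets each of cardinality at most k, and let W be a finite set with |W| > 2k that contains at least one member of F as a subset. Call an element e ∈ W false if W∖{e} contains a member of F as a subset, and true otherwise. Then: (i) every true element of W belongs to every member of F that is a subset of W; (ii) there are at most k true elements; and (iii) the number of true elements of W is at most the number of false elements of W. (The queue-order counting claim in the proof of Lemma 3.) -/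
open Classical in
/-- The queue-order counting claim in the proof of Lemma 3. Let `F` be a
family of finite sets, each of cardinality at most `k` (`k ≥ 1`), and let `W`
be a finite set with `|W| > 2k` containing some member of `F` as a subset.
Call `e ∈ W` *false* if `W \ {e}` still contains a member of `F`, and *true*
otherwise. Then (i) every true element belongs to every member of `F`
contained in `W`; (ii) there are at most `k` true elements; (iii) the number
of true elements is at most the number of false elements. -/
theorem true_false_elements_count {α : Type*} [DecidableEq α]
    (k : ℕ) (hk : 1 ≤ k) (F : Set (Finset α))
    (hcard : ∀ A ∈ F, A.card ≤ k)
    (W : Finset α) (hW : 2 * k < W.card)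
    (hwit : ∃ A ∈ F, A ⊆ W) :
    (∀ e ∈ W, ¬(∃ A ∈ F, A ⊆ W.erase e) → ∀ A ∈ F, A ⊆ W → e ∈ A) ∧
    (W.filter (fun e => ¬(∃ A ∈ F, A ⊆ W.erase e))).card ≤ k ∧
    (W.filter (fun e => ¬(∃ A ∈ F, A ⊆ W.erase e))).card ≤
      (W.filter (fun e => ∃ A ∈ F, A ⊆ W.erase e)).card := by
  obtain ⟨A₀, hA₀F, hA₀W⟩ := hwit
  have hi : ∀ e ∈ W, ¬(∃ A ∈ F, A ⊆ W.erase e) → ∀ A ∈ F, A ⊆ W → e ∈ A := by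
    intro e _ he A hAF hAW
    by_contra hne
    exact he ⟨A, hAF, fun x hx => Finset.mem_erase.2 ⟨fun h => hne (h ▸ hx), hAW hx⟩⟩
  have hsub : W.filter (fun e => ¬(∃ A ∈ F, A ⊆ W.erase e)) ⊆ A₀ := by
    intro e he
    rw [Finset.mem_filter] at he
    exact hi e he.1 he.2 A₀ hA₀F hA₀W
  have hk' : (W.filter (fun e => ¬(∃ A ∈ F, A ⊆ W.erase e))).card ≤ k :=
    le_trans (Finset.card_le_card hsub) (hcard A₀ hA₀F)
  refine ⟨hi, hk', ?_⟩
  have hsum := Finset.card_filter_add_card_filter_not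
    (s := W) (p := fun e => ∃ A ∈ F, A ⊆ W.erase e)
  omega
end

section
/- For every real number p with 0 < p < 1 and every integer t ≥ 1, ∑_{j=0}^{∞} (1 − (1 − p^j)^t) ≤ 1 + H_t / ln(1/p), where H_t = ∑_{i=1}^t 1/i is the t-th harmonic number. (This sum is the expected value of the maximum of t independent geometric random variables with success probability 1−p, used in the proof of Lemma 3 to bound the expected number of passes in the second sub-stage.) -/
/-!
The sum is the tail-sum formula `E[max] = ∑ P(max > j)` for the survival function
`g x = 1 - (1 - p ^ x) ^ t`, which is antitone, so `∑_{j ≥ 1} g j ≤ ∫_0^∞ g`. Substituting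
`u = 1 - p ^ x` turns `g x dx` into `(1 + u + ⋯ + u ^ (t - 1)) du / ln (1/p)`, whence
`∫_0^∞ g = H_t / ln (1/p)`; the term `j = 0` contributes at most `1`.
-/

open Real Finset Set

theorem Real.tsum_le_add_of_antitoneOn_of_integral_le {f : ℝ → ℝ} {C : ℝ}
    (hf : AntitoneOn f (Ici 0)) (hf_nonneg : ∀ j : ℕ, 0 ≤ f j)
    (hC : ∀ n : ℕ, ∫ x in 0..(n : ℝ), f x ≤ C) :
    ∑' j : ℕ, f j ≤ f 0 + C := by
  refine Real.tsum_le_of_sum_range_le hf_nonneg fun n => ?_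
  cases n with
  | zero => simpa using add_nonneg (hf_nonneg 0) (by simpa using hC 0)
  | succ n =>
    have hsum := (hf.mono Icc_subset_Ici_self : AntitoneOn f (Icc 0 (0 + n))).sum_le_integral
    simp only [zero_add] at hsum
    rw [sum_range_succ']
    push_cast at hsum ⊢
    linarith [hC n]

theorem hasDerivAt_sum_pow_succ_div {u : ℝ → ℝ} {u' x : ℝ} (hu : HasDerivAt u u' x) (n : ℕ) :
    HasDerivAt (fun y => ∑ i ∈ range n, u y ^ (i + 1) / (i + 1))
      ((∑ i ∈ range n, u x ^ i) * u') x := by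
  rw [sum_mul]
  refine HasDerivAt.fun_sum fun i _ => ?_
  refine ((hu.fun_pow (i + 1)).div_const ((i : ℝ) + 1)).congr_deriv ?_
  field_simp
  push_cast
  ring

section SurvivalFunction

variable {p : ℝ}

theorem one_sub_rpow_mem_Icc (hp0 : 0 ≤ p) (hp1 : p ≤ 1) {x : ℝ} (hx : 0 ≤ x) :
    1 - p ^ x ∈ Icc (0 : ℝ) 1 :=
  ⟨sub_nonneg.2 (rpow_le_one hp0 hp1 hx), sub_le_self _ (rpow_nonneg hp0 x)⟩

theorem antitoneOn_one_sub_one_sub_rpow_pow (hp0 : 0 ≤ p) (hp1 : p ≤ 1) (t : ℕ) :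
    AntitoneOn (fun x : ℝ => 1 - (1 - p ^ x) ^ t) (Ici 0) := by
  intro x hx y _ hxy
  have hpxy : p ^ y ≤ p ^ x := rpow_le_rpow_of_exponent_ge' hp0 hp1 hx hxy
  have := pow_le_pow_left₀ (one_sub_rpow_mem_Icc hp0 hp1 hx).1 (sub_le_sub_left hpxy 1) t
  simp only
  linarith

theorem one_sub_one_sub_rpow_pow_nonneg (hp0 : 0 ≤ p) (hp1 : p ≤ 1) (t : ℕ) {x : ℝ}
    (hx : 0 ≤ x) : 0 ≤ 1 - (1 - p ^ x) ^ t := by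
  obtain ⟨h0, h1⟩ := one_sub_rpow_mem_Icc hp0 hp1 hx
  linarith [pow_le_one₀ h0 h1 (n := t)]

theorem integral_one_sub_one_sub_rpow_pow (hp0 : 0 < p) (hp1 : p ≠ 1) (t : ℕ) (x : ℝ) :
    ∫ y in 0..x, (1 - (1 - p ^ y) ^ t) =
      (∑ i ∈ range t, (1 - p ^ x) ^ (i + 1) / (i + 1)) / -log p := by
  have hlog : log p ≠ 0 := log_ne_zero_of_pos_of_ne_one hp0 hp1
  have hderiv : ∀ y : ℝ, HasDerivAt
      (fun y => (∑ i ∈ range t, (1 - p ^ y) ^ (i + 1) / (i + 1)) / -log p)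
      (1 - (1 - p ^ y) ^ t) y := by
    intro y
    have hu := (hasStrictDerivAt_const_rpow hp0 y).hasDerivAt.const_sub 1
    refine ((hasDerivAt_sum_pow_succ_div hu t).div_const (-log p)).congr_deriv ?_
    rw [← geom_sum_mul_neg, sub_sub_cancel]
    field_simp
  have hcont : Continuous fun y : ℝ => 1 - (1 - p ^ y) ^ t := by
    have := continuous_const_rpow hp0.ne'
    fun_prop
  rw [intervalIntegral.integral_eq_sub_of_hasDerivAt (fun y _ => hderiv y)
    (hcont.intervalIntegrable 0 x)]
  simp

end SurvivalFunction

theorem expected_max_geometric_le_general (p : ℝ) (hp0 : 0 < p) (hp1 : p < 1)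
    (t : ℕ) :
    ∑' j : ℕ, (1 - (1 - p ^ j) ^ t) ≤
      1 + (∑ i ∈ Finset.range t, (1 : ℝ) / (i + 1)) / Real.log (1 / p) := by
  have hlog : Real.log (1 / p) = -log p := by rw [one_div, log_inv]
  have hL : 0 < -log p := neg_pos.2 (log_neg hp0 hp1)
  set f : ℝ → ℝ := fun x => 1 - (1 - p ^ x) ^ t
  have hf0 : f 0 ≤ 1 := by simp [f]
  calc ∑' j : ℕ, (1 - (1 - p ^ j) ^ t)
      = ∑' j : ℕ, f j := by simp only [f, rpow_natCast]
    _ ≤ f 0 + (∑ i ∈ range t, (1 : ℝ) / (i + 1)) / -log p := by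
      refine Real.tsum_le_add_of_antitoneOn_of_integral_le
        (antitoneOn_one_sub_one_sub_rpow_pow hp0.le hp1.le t)
        (fun j => one_sub_one_sub_rpow_pow_nonneg hp0.le hp1.le t j.cast_nonneg) fun n => ?_
      rw [integral_one_sub_one_sub_rpow_pow hp0 hp1.ne t]
      obtain ⟨hu0, hu1⟩ := one_sub_rpow_mem_Icc hp0.le hp1.le n.cast_nonneg
      gcongr
      exact pow_le_one₀ hu0 hu1
    _ ≤ _ := by rw [hlog]; linarith

/-- The expected value of the maximum of `t` independent geometric random
variables with success probability `1 − p`, namely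
`∑_{j=0}^∞ (1 − (1 − p^j)^t)`, is at most `1 + H_t / ln(1/p)`, where
`H_t = ∑_{i=1}^t 1/i` is the `t`-th harmonic number (used in the proof of
Lemma 3 to bound the expected number of passes in the second sub-stage). -/
theorem expected_max_geometric_le (p : ℝ) (hp0 : 0 < p) (hp1 : p < 1)
    (t : ℕ) (ht : 1 ≤ t) :
    ∑' j : ℕ, (1 - (1 - p ^ j) ^ t) ≤
      1 + (∑ i ∈ Finset.range t, (1 : ℝ) / (i + 1)) / Real.log (1 / p) :=
  expected_max_geometric_le_general p hp0 hp1 t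
end
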